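/- arXiv:1003.4001 — 3 statements merged into one kernel-verified Lean document; each statement's English description precedes it below -/
import Mathlib

section
/- For every non-negative integer r and every positive integer m, the number 2^m * (509203 + 11184810*r) - 1 is composite (not prime). -/
/-!
Every `2 ^ m * k - 1` with `k ≡ 509203` modulo `3 · 5 · 7 · 13 · 17 · 241` has a prime factor in
`{3, 5, 7, 13, 17, 241}`: the order of `2` modulo each of these primes divides `24`, and for every
residue `i` of `m` mod `24` one of them divides `2 ^ i * 509203 - 1`. Since `2 ^ m * k - 1`
exceeds `241`, that factor is proper.
-/

namespace Nat

theorem dvd_pow_mul_sub_one_of_pow_mod_mul_modEq {p b L k m : ℕ} (hL : b ^ L ≡ 1 [MOD p])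
    (hk : b ^ (m % L) * k ≡ 1 [MOD p]) : p ∣ b ^ m * k - 1 := by
  have hpow : b ^ m ≡ b ^ (m % L) [MOD p] := by
    conv_lhs => rw [← Nat.div_add_mod m L, pow_add, pow_mul]
    simpa using (hL.pow (m / L)).mul_right (b ^ (m % L))
  exact Nat.dvd_of_mod_eq_zero (Nat.sub_mod_eq_zero_of_mod_eq ((hpow.mul_right k).trans hk))

def IsCoveringSet (b k L : ℕ) (S : Finset ℕ) : Prop :=
  (∀ p ∈ S, b ^ L ≡ 1 [MOD p]) ∧ ∀ i < L, ∃ p ∈ S, b ^ i * k ≡ 1 [MOD p]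

namespace IsCoveringSet

variable {b k L : ℕ} {S : Finset ℕ}

theorem exists_dvd (hS : IsCoveringSet b k L S) (hL : 0 < L) (m : ℕ) :
    ∃ p ∈ S, p ∣ b ^ m * k - 1 := by
  obtain ⟨p, hpS, hp⟩ := hS.2 (m % L) (Nat.mod_lt m hL)
  exact ⟨p, hpS, dvd_pow_mul_sub_one_of_pow_mod_mul_modEq (hS.1 p hpS) hp⟩

theorem add_mul {M : ℕ} (hS : IsCoveringSet b k L S) (hM : ∀ p ∈ S, p ∣ M) (r : ℕ) :
    IsCoveringSet b (k + M * r) L S := by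
  refine ⟨hS.1, fun i hi => ?_⟩
  obtain ⟨p, hpS, hp⟩ := hS.2 i hi
  have hk : k + M * r ≡ k [MOD p] := by
    simpa using Nat.ModEq.add_left k (Nat.modEq_zero_iff_dvd.2 ((hM p hpS).mul_right r))
  exact ⟨p, hpS, (hk.mul_left _).trans hp⟩

end IsCoveringSet

end Nat

theorem isCoveringSet_509203 : Nat.IsCoveringSet 2 509203 24 {3, 5, 7, 13, 17, 241} := by
  unfold Nat.IsCoveringSet
  decide

theorem riesel_composite_general (r m : ℕ) :
    ¬ Nat.Prime (2 ^ m * (509203 + 11184810 * r) - 1) := by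
  obtain ⟨p, hpS, hpN⟩ :=
    (isCoveringSet_509203.add_mul (M := 11184810) (by decide) r).exists_dvd (by norm_num) m
  have hp : 2 ≤ p ∧ p ≤ 241 := by
    simp only [Finset.mem_insert, Finset.mem_singleton] at hpS
    omega
  have hN : 509203 ≤ 2 ^ m * (509203 + 11184810 * r) :=
    le_trans (by omega) (Nat.le_mul_of_pos_left _ (Nat.two_pow_pos m))
  exact Nat.not_prime_of_dvd_of_lt hpN hp.1 (by omega)

theorem riesel_composite (r m : ℕ) (hm : 1 ≤ m) :
    ¬ Nat.Prime (2 ^ m * (509203 + 11184810 * r) - 1) :=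
  riesel_composite_general r m
end

section
/- Suppose that for each i = 1,...,n, k_i is a positive integer and there exists a Hadamard matrix of order k_i * 2^(⌊ε·log₂ k_i⌋). Then, setting k = k₁·k₂·...·k_n, there exists a Hadamard matrix of order k * 2^m for some non-negative integer m ≤ ε·log₂ k. -/
def IsHadamardMatrix {n : ℕ} (H : Matrix (Fin n) (Fin n) ℝ) : Prop :=
  (∀ i j, H i j = 1 ∨ H i j = -1) ∧
    H * H.transpose = (n : ℝ) • (1 : Matrix (Fin n) (Fin n) ℝ)

def HadamardOrder (n : ℕ) : Prop :=
  ∃ H : Matrix (Fin n) (Fin n) ℝ, IsHadamardMatrix H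

/-! Take `m = ∑ i, ⌊ε log₂ kᵢ⌋`: the Kronecker product of the given matrices has order
`∏ kᵢ 2^⌊ε log₂ kᵢ⌋ = k 2^m`, and `m ≤ ∑ ε log₂ kᵢ = ε log₂ k`. -/

open Matrix Kronecker in
theorem HadamardOrder.mul {a b : ℕ} (ha : HadamardOrder a) (hb : HadamardOrder b) :
    HadamardOrder (a * b) := by
  obtain ⟨H, hH_sign, hH_orth⟩ := ha
  obtain ⟨K, hK_sign, hK_orth⟩ := hb
  refine ⟨reindex finProdFinEquiv finProdFinEquiv (H ⊗ₖ K), fun i j => ?_, ?_⟩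
  · rcases hH_sign i.divNat j.divNat with h | h <;>
      rcases hK_sign i.modNat j.modNat with h' | h' <;>
      simp [reindex_apply, kroneckerMap_apply, h, h']
  · have kronecker_orth : (H ⊗ₖ K) * (H ⊗ₖ K)ᵀ = ((a * b : ℕ) : ℝ) • 1 := by
      rw [← kroneckerMap_transpose, ← mul_kronecker_mul, hH_orth, hK_orth, smul_kronecker,
        kronecker_smul, one_kronecker_one, smul_smul, Nat.cast_mul]
    rw [reindex_apply, transpose_submatrix, submatrix_mul_equiv, kronecker_orth]
    simp [submatrix_smul, submatrix_one_equiv]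

theorem HadamardOrder.one : HadamardOrder 1 := by
  refine ⟨Matrix.of fun _ _ => 1, fun _ _ => Or.inl rfl, ?_⟩
  ext i j
  obtain rfl : i = j := Subsingleton.elim i j
  simp [Matrix.mul_apply]

theorem HadamardOrder.prod {ι : Type*} (s : Finset ι) (f : ι → ℕ)
    (h : ∀ i ∈ s, HadamardOrder (f i)) : HadamardOrder (∏ i ∈ s, f i) :=
  Finset.prod_induction f HadamardOrder (fun _ _ => HadamardOrder.mul) HadamardOrder.one h

theorem sum_floor_mul_logb_le {ι : Type*} (s : Finset ι) {ε b : ℝ} (hε : 0 ≤ ε) (hb : 1 < b)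
    (k : ι → ℕ) (hk : ∀ i ∈ s, 0 < k i) :
    ((∑ i ∈ s, ⌊ε * Real.logb b (k i)⌋₊ : ℕ) : ℝ) ≤ ε * Real.logb b (∏ i ∈ s, k i) := by
  have logb_prod : Real.logb b (∏ i ∈ s, k i) = ∑ i ∈ s, Real.logb b (k i) := by
    exact Real.logb_prod _ _ fun i hi => by exact_mod_cast (hk i hi).ne'
  rw [logb_prod, Finset.mul_sum, Nat.cast_sum]
  refine Finset.sum_le_sum fun i hi => Nat.floor_le ?_
  have : 0 ≤ Real.logb b (k i) := Real.logb_nonneg hb (by exact_mod_cast hk i hi)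
  positivity

theorem hadamard_product (ε : ℝ) (hε : 0 < ε) (n : ℕ) (k : Fin n → ℕ)
    (hk : ∀ i, 0 < k i)
    (hH : ∀ i, HadamardOrder (k i * 2 ^ ⌊ε * Real.logb 2 (k i)⌋₊)) :
    ∃ m : ℕ, (m : ℝ) ≤ ε * Real.logb 2 (∏ i, k i) ∧
      HadamardOrder ((∏ i, k i) * 2 ^ m) := by
  refine ⟨∑ i, ⌊ε * Real.logb 2 (k i)⌋₊,
    sum_floor_mul_logb_le _ hε.le one_lt_two k fun i _ => hk i, ?_⟩
  have := HadamardOrder.prod Finset.univ _ fun i _ => hH i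
  rwa [Finset.prod_mul_distrib, Finset.prod_pow_eq_pow_sum] at this
end

section
/- If p is an odd prime, then there exists a Hadamard matrix of order 2^m(p+1) for some non-negative integer m, where m ≥ 1 if p ≡ 1 (mod 4) and m ≥ 0 if p ≡ 3 (mod 4). In particular, for every odd prime p there is a Hadamard matrix of order 4(p+1) obtained by multiplying by further powers of 2. -/
/-!
Let `χ` be the quadratic character of a finite field `F` of odd order `q`. Bordering the
Jacobsthal matrix `(χ (a - b))_{a,b}` by a row of ones and a column of `χ (-1)`s gives a
conference matrix `C` of order `q + 1`: zero diagonal, `±1` elsewhere, `C Cᵀ = q I`. The row sums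
of the Jacobsthal matrix vanish and its distinct rows have inner product `-1`, a Jacobi sum.
Moreover `Cᵀ = χ(-1) C`. If `-1` is a non-square (`q ≡ 3 mod 4`), `C` is skew and `I + C` is
Hadamard of order `q + 1`; if `-1` is a square (`q ≡ 1 mod 4`), `C` is symmetric and substituting
`2 × 2` blocks for its entries gives a Hadamard matrix of order `2 (q + 1)`. Kronecker products
with the Sylvester matrix of order `2` then reach every larger power of two.
-/

open Matrix

open scoped Kronecker

namespace MulChar

section CommMonoid

variable {M R : Type*} [CommMonoid M] [CommRing R] {χ : MulChar M R}

lemma IsQuadratic.mul_self (hχ : χ.IsQuadratic) : χ * χ = 1 := by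
  nth_rewrite 2 [← hχ.inv]
  exact mul_inv_cancel χ

lemma IsQuadratic.apply_mul_self (hχ : χ.IsQuadratic) {a : M} (ha : IsUnit a) :
    χ a * χ a = 1 := by
  rw [← mul_apply, hχ.mul_self, one_apply ha]

lemma IsQuadratic.eq_one_or_eq_neg_one [NoZeroDivisors R] (hχ : χ.IsQuadratic) {a : M}
    (ha : IsUnit a) : χ a = 1 ∨ χ a = -1 :=
  mul_self_eq_one_iff.mp (hχ.apply_mul_self ha)

end CommMonoid

variable {F R : Type*} [Field F] [Fintype F] [CommRing R] {χ : MulChar F R}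

lemma sum_apply_sub [IsDomain R] (hχ : χ ≠ 1) (a : F) : ∑ c, χ (a - c) = 0 :=
  ((Equiv.subLeft a).sum_comp χ).trans (sum_eq_zero_of_ne_one hχ)

lemma IsQuadratic.sum_apply_sub_mul_self (hχ : χ.IsQuadratic) (a : F) :
    ∑ c, χ (a - c) * χ (a - c) = Fintype.card F - 1 := by
  classical
  calc ∑ c, χ (a - c) * χ (a - c) = ∑ x, (χ * χ) x :=
        (Equiv.subLeft a).sum_comp fun x ↦ χ x * χ x
    _ = Fintype.card F - 1 := by
      rw [hχ.mul_self, sum_one_eq_card_units, Fintype.card_eq_card_units_add_one (α := F)]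
      push_cast
      ring

lemma IsQuadratic.sum_apply_sub_mul_apply_sub [IsDomain R] (hχ : χ.IsQuadratic) (hχ₁ : χ ≠ 1)
    {a b : F} (hab : a ≠ b) : ∑ c, χ (a - c) * χ (b - c) = -1 := by
  have hd : b - a ≠ 0 := sub_ne_zero.mpr hab.symm
  -- `c = a + (b - a) x` turns the sum into `χ (-1)` times the Jacobi sum `J(χ, χ⁻¹)`
  have hsubst : ∀ x : F, χ (a - (a + (b - a) * x)) * χ (b - (a + (b - a) * x))
      = χ (-1) * (χ (b - a) * χ (b - a)) * (χ x * χ⁻¹ (1 - x)) := by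
    intro x
    rw [hχ.inv, ← map_mul, ← map_mul, ← map_mul, ← map_mul, ← map_mul]
    ring_nf
  calc ∑ c, χ (a - c) * χ (b - c)
      = ∑ x, χ (a - (a + (b - a) * x)) * χ (b - (a + (b - a) * x)) :=
        (((Equiv.mulLeft₀ (b - a) hd).trans (Equiv.addLeft a)).sum_comp
          fun c ↦ χ (a - c) * χ (b - c)).symm
    _ = χ (-1) * jacobiSum χ χ⁻¹ := by
        simp only [hsubst, hχ.apply_mul_self hd.isUnit, mul_one, jacobiSum, Finset.mul_sum]
    _ = -1 := by
        rw [jacobiSum_nontrivial_inv hχ₁, mul_neg, hχ.apply_mul_self isUnit_one.neg]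

end MulChar

namespace Matrix

section Hadamard

variable {n : Type*} [Fintype n] [DecidableEq n]

lemma isHadamard_iff_of_real {A : Matrix n n ℝ} :
    A.IsHadamard ↔ (∀ i j, A i j = 1 ∨ A i j = -1) ∧ A * Aᵀ = (Fintype.card n : ℝ) • 1 := by
  rcases isEmpty_or_nonempty n with hn | hn
  · exact ⟨fun _ ↦ ⟨isEmptyElim, Subsingleton.elim _ _⟩,
      fun _ ↦ ⟨isEmptyElim, Subsingleton.elim _ _, Subsingleton.elim _ _⟩⟩
  · have hcard : IsRegular (Fintype.card n : ℝ) := .of_ne_zero (by positivity)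
    simp [isHadamard_iff_mul_conjTranspose hcard, Unitary.mem_iff_eq_one_or_eq_neg_one,
      conjTranspose_eq_transpose_of_trivial]

def sylvesterTwo : Matrix (Fin 2) (Fin 2) ℝ := !![1, 1; 1, -1]

lemma sylvesterTwo_mul_transpose : sylvesterTwo * sylvesterTwoᵀ = (2 : ℝ) • 1 := by
  ext i j
  fin_cases i <;> fin_cases j <;> norm_num [sylvesterTwo, mul_apply, Fin.sum_univ_two]

lemma isHadamard_sylvesterTwo : sylvesterTwo.IsHadamard := by
  refine isHadamard_iff_of_real.mpr ⟨fun i j ↦ ?_, by simpa using sylvesterTwo_mul_transpose⟩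
  fin_cases i <;> fin_cases j <;> simp [sylvesterTwo]

end Hadamard

section Conference

variable {n : Type*} [Fintype n] [DecidableEq n]

structure IsConference (C : Matrix n n ℝ) : Prop where
  apply_self (i : n) : C i i = 0
  apply_of_ne {i j : n} (h : i ≠ j) : C i j = 1 ∨ C i j = -1
  mul_transpose : C * Cᵀ = ((Fintype.card n : ℝ) - 1) • 1

/-- The `2 × 2` block that fills the zero diagonal of a symmetric conference matrix in Paley's
second construction. -/
def paleyBlock : Matrix (Fin 2) (Fin 2) ℝ := !![1, -1; -1, -1]

lemma paleyBlock_mul_transpose : paleyBlock * paleyBlockᵀ = (2 : ℝ) • 1 := by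
  ext i j
  fin_cases i <;> fin_cases j <;> norm_num [paleyBlock, mul_apply, Fin.sum_univ_two]

lemma sylvesterTwo_mul_transpose_paleyBlock_add :
    sylvesterTwo * paleyBlockᵀ + paleyBlock * sylvesterTwoᵀ = 0 := by
  ext i j
  simp only [add_apply, mul_apply, Fin.sum_univ_two]
  fin_cases i <;> fin_cases j <;> norm_num [sylvesterTwo, paleyBlock]

variable {C : Matrix n n ℝ}

lemma IsConference.isHadamard_one_add (hC : C.IsConference) (hskew : Cᵀ = -C) :
    (1 + C).IsHadamard := by
  refine isHadamard_iff_of_real.mpr ⟨fun i j ↦ ?_, ?_⟩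
  · rcases eq_or_ne i j with rfl | h
    · simp [hC.apply_self]
    · simpa [one_apply_ne h] using hC.apply_of_ne h
  · calc (1 + C) * (1 + C)ᵀ = 1 + (C + Cᵀ) + C * Cᵀ := by
          rw [transpose_add, transpose_one, add_mul, mul_add, mul_add, one_mul, mul_one, one_mul]
          abel
      _ = (Fintype.card n : ℝ) • 1 := by
          rw [hC.mul_transpose, hskew, add_neg_cancel, sub_smul, one_smul]
          abel

lemma IsConference.isHadamard_kronecker_add (hC : C.IsConference) (hsymm : Cᵀ = C) :
    (C ⊗ₖ sylvesterTwo + 1 ⊗ₖ paleyBlock).IsHadamard := by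
  refine isHadamard_iff_of_real.mpr ⟨fun ⟨i, x⟩ ⟨j, y⟩ ↦ ?_, ?_⟩
  · rcases eq_or_ne i j with rfl | h
    · fin_cases x <;> fin_cases y <;> simp [hC.apply_self, paleyBlock]
    · rcases hC.apply_of_ne h with h' | h' <;>
        fin_cases x <;> fin_cases y <;> simp [one_apply_ne h, h', sylvesterTwo]
  · calc (C ⊗ₖ sylvesterTwo + 1 ⊗ₖ paleyBlock) * (C ⊗ₖ sylvesterTwo + 1 ⊗ₖ paleyBlock)ᵀ
        = (C * Cᵀ) ⊗ₖ (sylvesterTwo * sylvesterTwoᵀ)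
          + C ⊗ₖ (sylvesterTwo * paleyBlockᵀ + paleyBlock * sylvesterTwoᵀ)
          + 1 ⊗ₖ (paleyBlock * paleyBlockᵀ) := by
          rw [transpose_add, ← kroneckerMap_transpose, ← kroneckerMap_transpose, add_mul,
            mul_add, mul_add, ← mul_kronecker_mul, ← mul_kronecker_mul, ← mul_kronecker_mul,
            ← mul_kronecker_mul, kronecker_add, transpose_one, hsymm, mul_one, one_mul, one_mul]
          abel
      _ = (Fintype.card (n × Fin 2) : ℝ) • 1 := by
          rw [hC.mul_transpose, sylvesterTwo_mul_transpose,
            sylvesterTwo_mul_transpose_paleyBlock_add, paleyBlock_mul_transpose, kronecker_zero,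
            add_zero, smul_kronecker, kronecker_smul, one_kronecker_one, smul_smul, ← add_smul,
            Fintype.card_prod, Fintype.card_fin]
          push_cast
          ring_nf

end Conference

section Paley

-- The border column is scaled by `χ (-1)` so that the matrix is symmetric or skew with `χ`.
def paleyConference {F : Type*} [CommRing F] (χ : MulChar F ℝ) :
    Matrix (Unit ⊕ F) (Unit ⊕ F) ℝ :=
  of fun
    | .inl _, .inl _ => 0
    | .inl _, .inr _ => 1
    | .inr _, .inl _ => χ (-1)
    | .inr a, .inr b => χ (a - b)

lemma paleyConference_transpose {F : Type*} [CommRing F] {χ : MulChar F ℝ}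
    (hχ : χ.IsQuadratic) : (paleyConference χ)ᵀ = χ (-1) • paleyConference χ := by
  ext (_ | a) (_ | b)
  · simp [paleyConference]
  · simp [paleyConference]
  · simp [paleyConference, hχ.apply_mul_self isUnit_one.neg]
  · simp [paleyConference, ← map_mul]

variable {F : Type*} [Field F] [Fintype F] [DecidableEq F]

lemma isConference_paleyConference {χ : MulChar F ℝ} (hχ : χ.IsQuadratic) (hχ₁ : χ ≠ 1) :
    (paleyConference χ).IsConference where
  apply_self
    | .inl _ => rfl
    | .inr _ => by simp [paleyConference, MulChar.map_zero]
  apply_of_ne {i j} h := by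
    rcases i with _ | a <;> rcases j with _ | b
    · exact absurd rfl h
    · simp [paleyConference]
    · exact hχ.eq_one_or_eq_neg_one isUnit_one.neg
    · exact hχ.eq_one_or_eq_neg_one (sub_ne_zero.mpr (by simpa using h)).isUnit
  mul_transpose := by
    ext (_ | a) (_ | b) <;>
      simp only [mul_apply, transpose_apply, Fintype.sum_sum_type, Fintype.card_sum,
        paleyConference, of_apply, smul_apply, one_apply, Fintype.univ_unit,
        Finset.sum_singleton, Fintype.card_unit]
    · simp
    · simp [MulChar.sum_apply_sub hχ₁]
    · simp [MulChar.sum_apply_sub hχ₁]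
    · rcases eq_or_ne a b with rfl | hab
      · simp [hχ.sum_apply_sub_mul_self, hχ.apply_mul_self isUnit_one.neg]
      · simp [hχ.sum_apply_sub_mul_apply_sub hχ₁ hab, hχ.apply_mul_self isUnit_one.neg, hab]

lemma isConference_paleyConference_quadraticChar (hF : ringChar F ≠ 2) :
    (paleyConference ((quadraticChar F).ringHomComp (Int.castRingHom ℝ))).IsConference :=
  isConference_paleyConference ((quadraticChar_isQuadratic F).comp _)
    ((MulChar.ringHomComp_ne_one_iff Int.cast_injective).mpr (quadraticChar_ne_one hF))

lemma paleyConference_quadraticChar_transpose :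
    (paleyConference ((quadraticChar F).ringHomComp (Int.castRingHom ℝ)))ᵀ
      = (quadraticChar F (-1) : ℝ) • paleyConference
          ((quadraticChar F).ringHomComp (Int.castRingHom ℝ)) :=
  paleyConference_transpose ((quadraticChar_isQuadratic F).comp _)

end Paley

end Matrix

lemma isHadamardMatrix_iff {n : ℕ} {H : Matrix (Fin n) (Fin n) ℝ} :
    IsHadamardMatrix H ↔ H.IsHadamard := by
  rw [isHadamard_iff_of_real, Fintype.card_fin, IsHadamardMatrix]

namespace HadamardOrder

lemma of_isHadamard {n : Type*} [Fintype n] [DecidableEq n] {A : Matrix n n ℝ}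
    (hA : A.IsHadamard) : HadamardOrder (Fintype.card n) :=
  ⟨reindex (Fintype.equivFin n) (Fintype.equivFin n) A,
    isHadamardMatrix_iff.mpr (hA.reindex _ _)⟩

lemma two_mul {n : ℕ} (h : HadamardOrder n) : HadamardOrder (2 * n) := by
  obtain ⟨H, hH⟩ := h
  simpa using of_isHadamard (isHadamard_sylvesterTwo.kronecker (isHadamardMatrix_iff.mp hH))

lemma two_pow_mul {n : ℕ} (h : HadamardOrder n) (m : ℕ) : HadamardOrder (2 ^ m * n) := by
  induction m with
  | zero => simpa using h
  | succ m ih => simpa [pow_succ', mul_assoc] using ih.two_mul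

variable {F : Type*} [Field F] [Fintype F]

lemma card_add_one_of_not_isSquare_neg_one (hF : ringChar F ≠ 2) (h : ¬IsSquare (-1 : F)) :
    HadamardOrder (Fintype.card F + 1) := by
  classical
  have hskew := paleyConference_quadraticChar_transpose (F := F)
  rw [quadraticChar_neg_one_iff_not_isSquare.mpr h, Int.cast_neg, Int.cast_one,
    neg_one_smul] at hskew
  simpa [add_comm] using
    of_isHadamard ((isConference_paleyConference_quadraticChar hF).isHadamard_one_add hskew)

lemma two_mul_card_add_one_of_isSquare_neg_one (hF : ringChar F ≠ 2) (h : IsSquare (-1 : F)) :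
    HadamardOrder (2 * (Fintype.card F + 1)) := by
  classical
  have hsymm := paleyConference_quadraticChar_transpose (F := F)
  rw [(quadraticChar_one_iff_isSquare (neg_ne_zero.mpr one_ne_zero)).mpr h, Int.cast_one,
    one_smul] at hsymm
  simpa [add_comm, mul_comm] using
    of_isHadamard ((isConference_paleyConference_quadraticChar hF).isHadamard_kronecker_add hsymm)

end HadamardOrder

theorem paley_hadamard (p : ℕ) (hp : p.Prime) (hodd : Odd p) :
    (∃ m : ℕ, (p % 4 = 1 → 1 ≤ m) ∧ HadamardOrder (2 ^ m * (p + 1))) ∧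
      HadamardOrder (4 * (p + 1)) := by
  have := Fact.mk hp
  have hchar : ringChar (ZMod p) ≠ 2 := by
    rw [ZMod.ringChar_zmod_n]
    rintro rfl
    exact Nat.not_even_iff_odd.mpr hodd even_two
  obtain ⟨m, hm, hm2, h⟩ :
      ∃ m, (p % 4 = 1 → 1 ≤ m) ∧ m ≤ 2 ∧ HadamardOrder (2 ^ m * (p + 1)) := by
    rcases Nat.odd_mod_four_iff.mp (Nat.odd_iff.mp hodd) with h1 | h3
    · refine ⟨1, fun _ ↦ le_rfl, by norm_num, ?_⟩
      simpa using HadamardOrder.two_mul_card_add_one_of_isSquare_neg_one hchar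
        (ZMod.exists_sq_eq_neg_one_iff.mpr (by omega))
    · refine ⟨0, by omega, by norm_num, ?_⟩
      simpa using HadamardOrder.card_add_one_of_not_isSquare_neg_one hchar
        (fun hsq ↦ ZMod.exists_sq_eq_neg_one_iff.mp hsq h3)
  refine ⟨⟨m, hm, h⟩, ?_⟩
  simpa [← mul_assoc, ← pow_add, Nat.sub_add_cancel hm2] using h.two_pow_mul (2 - m)
end
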